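/- Fix constants 0 < c₁ ≤ c₂. There exist constants 0 < c ≤ C and a₀ ∈ (0,1) such that for every a ∈ (0, a₀) and every bounded measurable set Ω ⊂ ℝ² that satisfies the sandwich hypothesis with constants c₁, c₂ at scale a, the largest eigenvalue of the logarithmic potential operator satisfies c · a² · |log a| ≤ λ₀(Ω) ≤ C · a² · |log a|. -/

import Mathlib

open MeasureTheory Real

noncomputable section

/-- Points of the plane. -/
abbrev Pt2 := EuclideanSpace ℝ (Fin 2)

/-- The logarithmic kernel `-(1/(2π)) log |x - y|` in dimension 2. -/
def logKernel (x y : Pt2) : ℝ := -(1 / (2 * π)) * Real.log (dist x y)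

/-- The logarithmic potential operator `N_Ω`. -/
def NOp (Ω : Set Pt2) (f : Pt2 → ℝ) (x : Pt2) : ℝ := ∫ y in Ω, logKernel x y * f y

/-- The quadratic form `⟨N_Ω u, u⟩` on `L²(Ω)`. -/
def quadForm (Ω : Set Pt2) (u : Lp ℝ 2 (volume.restrict Ω)) : ℝ :=
  ∫ x in Ω, NOp Ω u x * u x

/-- The `n`-th eigenvalue of the logarithmic potential operator, via the max–min principle:
`λ_n(Ω) = sup` over `(n+1)`-dimensional subspaces `Ξ` of `L²(Ω)` of
`inf` over nonzero `u ∈ Ξ` of `⟨N_Ω u, u⟩ / ‖u‖²`. -/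
def eigen2 (Ω : Set Pt2) (n : ℕ) : ℝ :=
  sSup {r : ℝ | ∃ Ξ : Submodule ℝ (Lp ℝ 2 (volume.restrict Ω)),
    Module.finrank ℝ ↥Ξ = n + 1 ∧
    r = sInf {q : ℝ | ∃ u ∈ Ξ, u ≠ 0 ∧ q = quadForm Ω u / ‖u‖ ^ 2}}

/-- The sandwich hypothesis: `Ω` is squeezed between two discs of radii comparable to `a`. -/
def Sandwich (c₁ c₂ a : ℝ) (Ω : Set Pt2) : Prop :=
  ∃ (z₁ z₂ : Pt2) (ρ₁ ρ₂ : ℝ),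
    c₁ * a ≤ ρ₁ ∧ ρ₁ ≤ c₂ * a ∧ c₁ * a ≤ ρ₂ ∧ ρ₂ ≤ c₂ * a ∧
    Metric.ball z₁ ρ₁ ⊆ Ω ∧ Ω ⊆ Metric.ball z₂ ρ₂

open Metric Set Function Module
open scoped ENNReal

/-!
Upper bound: by Schur's test, `|⟨N_Ω u, u⟩| ≤ M ‖u‖²` with
`M = sup_{x ∈ Ω} ∫_Ω |log |x - y|| dy / (2π)`.
If `Ω ⊆ D(z₂, ρ₂)`, then `Ω ⊆ D(x, 2ρ₂)` for every `x ∈ Ω`, and the layer-cake formula bounds the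
integral of `-log |x - y|` over a disc of radius `R ≤ 1` by `π R² (1 - log R)`; with `R = 2ρ₂ ~ a`
this is `O(a² |log a|)`.

Lower bound: the indicator of the inner disc `D(z₁, ρ₁)` spans a one-dimensional trial space.
Off the diagonal the kernel is at least `-log (2ρ₁) / (2π)` on that disc, so the Rayleigh quotient
is at least `ρ₁² (-log (2ρ₁)) / 2`, which is of order `a² |log a|`.
-/

theorem ENNReal.two_mul_le_add_sq (a b : ℝ≥0∞) : 2 * a * b ≤ a ^ 2 + b ^ 2 := by
  rcases eq_or_ne a ⊤ with rfl | ha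
  · simp
  rcases eq_or_ne b ⊤ with rfl | hb
  · simp
  lift a to NNReal using ha
  lift b to NNReal using hb
  exact_mod_cast _root_.two_mul_le_add_sq a b

section Schur

variable {α : Type*} [MeasurableSpace α] {μ : Measure α} [SFinite μ] {K : α → α → ℝ≥0∞}
  {f : α → ℝ≥0∞} {M : ℝ≥0∞}

theorem lintegral_lintegral_kernel_mul_le (hK : Measurable (uncurry K)) (hf : Measurable f)
    (hrow : ∀ᵐ x ∂μ, ∫⁻ y, K x y ∂μ ≤ M) (hcol : ∀ᵐ y ∂μ, ∫⁻ x, K x y ∂μ ≤ M) :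
    ∫⁻ x, (∫⁻ y, K x y * f y ∂μ) * f x ∂μ ≤ M * ∫⁻ x, f x ^ 2 ∂μ := by
  have hKx : ∀ x, Measurable (K x) := fun x => hK.comp measurable_prodMk_left
  have hKy : ∀ y, Measurable (K · y) := fun y => hK.comp measurable_prodMk_right
  have row : ∫⁻ x, ∫⁻ y, K x y * f x ^ 2 ∂μ ∂μ ≤ M * ∫⁻ x, f x ^ 2 ∂μ :=
    calc _ = ∫⁻ x, (∫⁻ y, K x y ∂μ) * f x ^ 2 ∂μ :=
          lintegral_congr fun x => lintegral_mul_const _ (hKx x)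
      _ ≤ ∫⁻ x, M * f x ^ 2 ∂μ := lintegral_mono_ae (hrow.mono fun x hx => by gcongr)
      _ = _ := lintegral_const_mul _ (hf.pow_const 2)
  have col : ∫⁻ x, ∫⁻ y, K x y * f y ^ 2 ∂μ ∂μ ≤ M * ∫⁻ x, f x ^ 2 ∂μ :=
    calc _ = ∫⁻ y, (∫⁻ x, K x y ∂μ) * f y ^ 2 ∂μ := by
          rw [lintegral_lintegral_swap (hK.mul ((hf.comp measurable_snd).pow_const 2)).aemeasurable]
          exact lintegral_congr fun y => lintegral_mul_const _ (hKy y)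
      _ ≤ ∫⁻ y, M * f y ^ 2 ∂μ := lintegral_mono_ae (hcol.mono fun y hy => by gcongr)
      _ = _ := lintegral_const_mul _ (hf.pow_const 2)
  have hrow_meas : Measurable fun x => ∫⁻ y, K x y * f x ^ 2 ∂μ :=
    (hK.mul ((hf.comp measurable_fst).pow_const 2)).lintegral_prod_right'
  refine (ENNReal.mul_le_mul_iff_right two_ne_zero ENNReal.ofNat_ne_top).1 ?_
  calc 2 * ∫⁻ x, (∫⁻ y, K x y * f y ∂μ) * f x ∂μ
      = ∫⁻ x, ∫⁻ y, K x y * (2 * f x * f y) ∂μ ∂μ := by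
        rw [← lintegral_const_mul' _ _ ENNReal.ofNat_ne_top]
        refine lintegral_congr fun x => ?_
        have hKf : Measurable fun y => K x y * f y := (hKx x).mul hf
        rw [← lintegral_mul_const _ hKf, ← lintegral_const_mul _ (hKf.mul_const _)]
        congr 1 with y
        ring
    _ ≤ ∫⁻ x, (∫⁻ y, K x y * f x ^ 2 ∂μ) + ∫⁻ y, K x y * f y ^ 2 ∂μ ∂μ := by
        refine lintegral_mono fun x => ?_
        rw [← lintegral_add_left ((hKx x).mul_const _)]
        refine lintegral_mono fun y => ?_
        rw [← mul_add]
        gcongr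
        exact ENNReal.two_mul_le_add_sq _ _
    _ = (∫⁻ x, ∫⁻ y, K x y * f x ^ 2 ∂μ ∂μ) + ∫⁻ x, ∫⁻ y, K x y * f y ^ 2 ∂μ ∂μ :=
        lintegral_add_left hrow_meas _
    _ ≤ M * ∫⁻ x, f x ^ 2 ∂μ + M * ∫⁻ x, f x ^ 2 ∂μ := add_le_add row col
    _ = 2 * (M * ∫⁻ x, f x ^ 2 ∂μ) := (two_mul _).symm

end Schur

lemma lintegral_enorm_sq_eq_enorm_sq {α E : Type*} [MeasurableSpace α] {μ : Measure α}
    [NormedAddCommGroup E] (u : Lp E 2 μ) : ∫⁻ x, ‖u x‖ₑ ^ 2 ∂μ = ‖u‖ₑ ^ 2 := by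
  have := eLpNorm_nnreal_pow_eq_lintegral (f := u) (μ := μ) (p := 2) two_ne_zero
  simp only [NNReal.coe_ofNat, ENNReal.rpow_two] at this
  rw [Lp.enorm_def, ← this]
  rfl

lemma norm_sq_indicatorConstLp_one {α : Type*} [MeasurableSpace α] {μ : Measure α} {s : Set α}
    (hs : MeasurableSet s) (hμs : μ s ≠ ⊤) :
    ‖indicatorConstLp 2 hs hμs (1 : ℝ)‖ ^ 2 = μ.real s := by
  rw [norm_indicatorConstLp two_ne_zero ENNReal.ofNat_ne_top, norm_one, one_mul,
    ← rpow_natCast, ← rpow_mul measureReal_nonneg]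
  norm_num

lemma setOf_lt_neg_log_dist_subset_ball {X : Type*} [PseudoMetricSpace X] (x : X) {t : ℝ}
    (ht : 0 < t) :
    {y | t < -log (dist x y)} ⊆ ball x (exp (-t)) := by
  intro y (hy : t < -log (dist x y))
  have hpos : 0 < dist x y := by
    refine dist_nonneg.lt_of_ne fun h => ?_
    rw [← h, log_zero] at hy
    linarith
  rw [mem_ball, dist_comm, ← log_lt_iff_lt_exp hpos]
  linarith

lemma lintegral_ofReal_exp_neg_Ioi (T : ℝ) :
    ∫⁻ t in Ioi T, ENNReal.ofReal (exp (-t)) = ENNReal.ofReal (exp (-T)) := by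
  rw [← ofReal_integral_eq_lintegral_ofReal (integrableOn_exp_neg_Ioi T)
    (ae_of_all _ fun t => (exp_pos _).le), integral_exp_neg_Ioi]

section LogIntegral

variable {E : Type*} [NormedAddCommGroup E] [NormedSpace ℝ E] [FiniteDimensional ℝ E]
  [MeasurableSpace E] [BorelSpace E] (μ : Measure E) [μ.IsAddHaarMeasure]

theorem setLIntegral_neg_log_dist_ball_le [Nontrivial E] (x : E) {R : ℝ} (hR0 : 0 < R)
    (hR1 : R ≤ 1) :
    ∫⁻ y in ball x R, ENNReal.ofReal (-log (dist x y)) ∂μ ≤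
      ENNReal.ofReal (R ^ finrank ℝ E * (1 - log R)) * μ (ball 0 1) := by
  set d := finrank ℝ E
  set T := -log R
  have hT : 0 ≤ T := neg_nonneg.2 (log_nonpos hR0.le hR1)
  have hnonneg : 0 ≤ᵐ[μ.restrict (ball x R)] fun y => -log (dist x y) := by
    filter_upwards [ae_restrict_mem measurableSet_ball] with y hy
    rw [mem_ball, dist_comm] at hy
    exact neg_nonneg.2 (log_nonpos dist_nonneg (hy.trans_le hR1).le)
  have hmeas : AEMeasurable (fun y => -log (dist x y)) (μ.restrict (ball x R)) :=
    (measurable_log.comp (measurable_const.dist measurable_id)).neg.aemeasurable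
  have near : ∫⁻ t in Ioc 0 T, μ.restrict (ball x R) {y | t < -log (dist x y)} ≤
      ENNReal.ofReal (R ^ d * T) * μ (ball 0 1) :=
    calc _ ≤ ∫⁻ _ in Ioc 0 T, μ (ball x R) := by
          refine lintegral_mono fun t => ?_
          rw [← μ.restrict_apply_univ]
          exact measure_mono (subset_univ _)
      _ = ENNReal.ofReal (R ^ d * T) * μ (ball 0 1) := by
          rw [setLIntegral_const, Real.volume_Ioc, sub_zero, μ.addHaar_ball_of_pos x hR0,
            ENNReal.ofReal_mul (by positivity)]
          ring
  have far : ∫⁻ t in Ioi T, μ.restrict (ball x R) {y | t < -log (dist x y)} ≤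
      ENNReal.ofReal (R ^ d) * μ (ball 0 1) :=
    calc _ ≤ ∫⁻ t in Ioi T, ENNReal.ofReal (R ^ (d - 1)) * μ (ball 0 1) *
          ENNReal.ofReal (exp (-t)) := by
          refine setLIntegral_mono' measurableSet_Ioi fun t (ht : T < t) => ?_
          have hexp : exp (-t) < R := by
            rw [← exp_log hR0, exp_lt_exp]
            linarith
          calc _ ≤ μ {y | t < -log (dist x y)} := μ.restrict_apply_le _ _
            _ ≤ μ (ball x (exp (-t))) :=
                measure_mono (setOf_lt_neg_log_dist_subset_ball x (hT.trans_lt ht))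
            _ = ENNReal.ofReal (exp (-t) ^ d) * μ (ball 0 1) := μ.addHaar_ball_of_pos x (exp_pos _)
            _ ≤ _ := by
                rw [mul_right_comm, ← ENNReal.ofReal_mul (by positivity)]
                gcongr
                rw [← pow_sub_one_mul finrank_pos.ne']
                gcongr
      _ = ENNReal.ofReal (R ^ (d - 1)) * μ (ball 0 1) * ENNReal.ofReal R := by
          rw [lintegral_const_mul _ (by fun_prop), lintegral_ofReal_exp_neg_Ioi, neg_neg,
            exp_log hR0]
      _ = ENNReal.ofReal (R ^ d) * μ (ball 0 1) := by
          rw [mul_right_comm, ← ENNReal.ofReal_mul (by positivity),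
            pow_sub_one_mul finrank_pos.ne']
  calc _ = ∫⁻ t in Ioc 0 T ∪ Ioi T, μ.restrict (ball x R) {y | t < -log (dist x y)} := by
        rw [lintegral_eq_lintegral_meas_lt _ hnonneg hmeas, Ioc_union_Ioi_eq_Ioi hT]
    _ ≤ ENNReal.ofReal (R ^ d * T) * μ (ball 0 1) + ENNReal.ofReal (R ^ d) * μ (ball 0 1) := by
        rw [lintegral_union measurableSet_Ioi (Ioc_disjoint_Ioi le_rfl)]
        exact add_le_add near far
    _ = _ := by
        rw [← add_mul, ← ENNReal.ofReal_add (by positivity) (by positivity)]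
        congr 2
        ring

end LogIntegral

section Fubini

variable {α : Type*} [MeasurableSpace α] {μ : Measure α} [SFinite μ] {K : α → α → ℝ}
  {B : Set α}

theorem integrableOn_prod_of_lintegral_enorm_le (hK : Measurable (uncurry K))
    (hB : MeasurableSet B) (hμB : μ B ≠ ⊤) {M : ℝ≥0∞} (hM : M ≠ ⊤)
    (hrow : ∀ x ∈ B, ∫⁻ y in B, ‖K x y‖ₑ ∂μ ≤ M) :
    IntegrableOn (uncurry K) (B ×ˢ B) (μ.prod μ) := by
  refine ⟨hK.aestronglyMeasurable, ?_⟩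
  rw [HasFiniteIntegral, ← Measure.prod_restrict, lintegral_prod _ hK.enorm.aemeasurable]
  calc ∫⁻ x in B, ∫⁻ y in B, ‖K x y‖ₑ ∂μ ∂μ ≤ ∫⁻ _ in B, M ∂μ := setLIntegral_mono' hB hrow
    _ < ⊤ := by
        rw [setLIntegral_const]
        exact ENNReal.mul_lt_top hM.lt_top hμB.lt_top

theorem le_setIntegral_setIntegral_of_ae_le (hK : Measurable (uncurry K)) (hμB : μ B ≠ ⊤)
    (hint : IntegrableOn (uncurry K) (B ×ˢ B) (μ.prod μ)) {β : ℝ}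
    (hle : ∀ᵐ x ∂μ.restrict B, ∀ᵐ y ∂μ.restrict B, β ≤ K x y) :
    β * μ.real B ^ 2 ≤ ∫ x in B, ∫ y in B, K x y ∂μ ∂μ := by
  have hprod : ∀ᵐ z ∂(μ.prod μ).restrict (B ×ˢ B), β ≤ uncurry K z := by
    rw [← Measure.prod_restrict]
    exact (Measure.ae_prod_iff_ae_ae (measurableSet_le measurable_const hK)).2 hle
  calc β * μ.real B ^ 2 = ∫ _ in B ×ˢ B, β ∂μ.prod μ := by
        rw [setIntegral_const, measureReal_prod_prod, smul_eq_mul]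
        ring
    _ ≤ ∫ z in B ×ˢ B, uncurry K z ∂μ.prod μ := by
        refine integral_mono_ae (integrableOn_const ?_) hint hprod
        rw [Measure.prod_prod]
        exact ENNReal.mul_ne_top hμB hμB
    _ = _ := setIntegral_prod _ hint

end Fubini

lemma logKernel_comm (x y : Pt2) : logKernel x y = logKernel y x := by
  rw [logKernel, logKernel, dist_comm]

lemma measurable_logKernel : Measurable (uncurry logKernel) :=
  (measurable_log.comp measurable_dist).const_mul _

lemma le_logKernel {x y : Pt2} {r : ℝ} (hxy : x ≠ y) (h : dist x y ≤ r) :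
    -(1 / (2 * π)) * log r ≤ logKernel x y :=
  mul_le_mul_of_nonpos_left (log_le_log (dist_pos.2 hxy) h) (neg_nonpos.2 (by positivity))

lemma enorm_logKernel {x y : Pt2} (h : dist x y ≤ 1) :
    ‖logKernel x y‖ₑ = ENNReal.ofReal (1 / (2 * π)) * ENNReal.ofReal (-log (dist x y)) := by
  have hlog : 0 ≤ -log (dist x y) := neg_nonneg.2 (log_nonpos dist_nonneg h)
  rw [← ENNReal.ofReal_mul (by positivity), ← ofReal_norm, logKernel, neg_mul_comm,
    Real.norm_eq_abs, abs_of_nonneg (mul_nonneg (by positivity) hlog)]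

theorem lintegral_enorm_logKernel_le {Ω : Set Pt2} {x : Pt2} {R : ℝ} (hR0 : 0 < R) (hR1 : R ≤ 1)
    (hΩ : Ω ⊆ ball x R) :
    ∫⁻ y in Ω, ‖logKernel x y‖ₑ ≤ ENNReal.ofReal (R ^ 2 * (1 - log R) / 2) := by
  have hlog : 0 ≤ 1 - log R := by linarith [log_nonpos hR0.le hR1]
  calc _ ≤ ∫⁻ y in ball x R, ‖logKernel x y‖ₑ := lintegral_mono_set hΩ
    _ = ENNReal.ofReal (1 / (2 * π)) * ∫⁻ y in ball x R, ENNReal.ofReal (-log (dist x y)) := by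
        rw [← lintegral_const_mul' _ _ ENNReal.ofReal_ne_top]
        refine setLIntegral_congr_fun measurableSet_ball fun y hy => enorm_logKernel ?_
        rw [mem_ball, dist_comm] at hy
        exact (hy.trans_le hR1).le
    _ ≤ ENNReal.ofReal (1 / (2 * π)) *
          (ENNReal.ofReal (R ^ 2 * (1 - log R)) * ENNReal.ofReal π) := by
        gcongr
        simpa using setLIntegral_neg_log_dist_ball_le volume x hR0 hR1
    _ = _ := by
        rw [← ENNReal.ofReal_mul (by positivity), ← ENNReal.ofReal_mul (by positivity)]
        congr 1
        field_simp

theorem lintegral_enorm_logKernel_le_of_subset_ball {Ω : Set Pt2} {x z : Pt2} {ρ : ℝ}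
    (hρ : 0 < ρ) (h2ρ : 2 * ρ ≤ 1) (hΩ : Ω ⊆ ball z ρ) (hx : x ∈ Ω) :
    ∫⁻ y in Ω, ‖logKernel x y‖ₑ ≤ ENNReal.ofReal (2 * ρ ^ 2 * (1 - log (2 * ρ))) := by
  have hball : ball z ρ ⊆ ball x (2 * ρ) := by
    refine ball_subset_ball' ?_
    rw [dist_comm]
    linarith [mem_ball.1 (hΩ hx)]
  convert lintegral_enorm_logKernel_le (by positivity) h2ρ (hΩ.trans hball) using 2
  ring

theorem abs_quadForm_le {Ω : Set Pt2} (hΩ : MeasurableSet Ω) {M : ℝ} (hM : 0 ≤ M)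
    (hK : ∀ x ∈ Ω, ∫⁻ y in Ω, ‖logKernel x y‖ₑ ≤ ENNReal.ofReal M)
    (u : Lp ℝ 2 (volume.restrict Ω)) :
    |quadForm Ω u| ≤ M * ‖u‖ ^ 2 := by
  have hrow : ∀ᵐ x ∂volume.restrict Ω, ∫⁻ y in Ω, ‖logKernel x y‖ₑ ≤ ENNReal.ofReal M :=
    (ae_restrict_mem hΩ).mono hK
  have hcol : ∀ᵐ y ∂volume.restrict Ω, ∫⁻ x in Ω, ‖logKernel x y‖ₑ ≤ ENNReal.ofReal M := by
    simpa only [logKernel_comm] using hrow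
  have key : ‖quadForm Ω u‖ₑ ≤ ENNReal.ofReal M * ‖u‖ₑ ^ 2 :=
    calc ‖quadForm Ω u‖ₑ ≤ ∫⁻ x in Ω, ‖NOp Ω u x‖ₑ * ‖u x‖ₑ := by
          rw [quadForm]
          exact (enorm_integral_le_lintegral_enorm _).trans_eq
            (lintegral_congr fun x => enorm_mul _ _)
      _ ≤ ∫⁻ x in Ω, (∫⁻ y in Ω, ‖logKernel x y‖ₑ * ‖u y‖ₑ) * ‖u x‖ₑ := by
          gcongr with x
          rw [NOp]
          exact (enorm_integral_le_lintegral_enorm _).trans_eq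
            (lintegral_congr fun y => enorm_mul _ _)
      _ ≤ ENNReal.ofReal M * ∫⁻ x in Ω, ‖u x‖ₑ ^ 2 :=
          lintegral_lintegral_kernel_mul_le measurable_logKernel.enorm
            (Lp.stronglyMeasurable u).measurable.enorm hrow hcol
      _ = _ := by rw [lintegral_enorm_sq_eq_enorm_sq]
  rw [← ofReal_norm, ← ofReal_norm, ← ENNReal.ofReal_pow (norm_nonneg _),
    ← ENNReal.ofReal_mul hM, ENNReal.ofReal_le_ofReal_iff (by positivity)] at key
  simpa only [Real.norm_eq_abs] using key

theorem abs_quadForm_le_of_subset_ball {Ω : Set Pt2} {z : Pt2} {ρ : ℝ} (hΩ : MeasurableSet Ω)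
    (hρ : 0 < ρ) (h2ρ : 2 * ρ ≤ 1) (hsub : Ω ⊆ ball z ρ) (u : Lp ℝ 2 (volume.restrict Ω)) :
    |quadForm Ω u| ≤ 2 * ρ ^ 2 * (1 - log (2 * ρ)) * ‖u‖ ^ 2 := by
  have hlog : log (2 * ρ) ≤ 0 := log_nonpos (by positivity) h2ρ
  exact abs_quadForm_le hΩ (by nlinarith [sq_nonneg ρ])
    (fun x hx => lintegral_enorm_logKernel_le_of_subset_ball hρ h2ρ hsub hx) u

section Spectral

variable {Ω : Set Pt2}

lemma quadForm_smul (t : ℝ) (u : Lp ℝ 2 (volume.restrict Ω)) :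
    quadForm Ω (t • u) = t ^ 2 * quadForm Ω u := by
  have hcoe := Lp.coeFn_smul t u
  have hNOp : ∀ x, NOp Ω ⇑(t • u) x = t * NOp Ω u x := fun x => by
    rw [NOp, NOp, ← integral_const_mul]
    refine integral_congr_ae ?_
    filter_upwards [hcoe] with y hy
    rw [hy, Pi.smul_apply, smul_eq_mul]
    ring
  rw [quadForm, quadForm, ← integral_const_mul]
  refine integral_congr_ae ?_
  filter_upwards [hcoe] with x hx
  rw [hNOp, hx, Pi.smul_apply, smul_eq_mul]
  ring

lemma setOf_rayleigh_span_singleton {u : Lp ℝ 2 (volume.restrict Ω)} (hu : u ≠ 0) :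
    {q : ℝ | ∃ v ∈ Submodule.span ℝ {u}, v ≠ 0 ∧ q = quadForm Ω v / ‖v‖ ^ 2} =
      {quadForm Ω u / ‖u‖ ^ 2} := by
  ext q
  constructor
  · rintro ⟨v, hv, hv0, rfl⟩
    obtain ⟨t, rfl⟩ := Submodule.mem_span_singleton.1 hv
    have ht : t ≠ 0 := by
      rintro rfl
      exact hv0 (zero_smul ℝ u)
    rw [quadForm_smul, norm_smul, mul_pow, Real.norm_eq_abs, sq_abs,
      mul_div_mul_left _ _ (pow_ne_zero 2 ht)]
    rfl
  · rintro rfl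
    exact ⟨u, Submodule.mem_span_singleton_self u, hu, rfl⟩

variable {Λ : ℝ}

lemma sInf_rayleigh_le (hΛ : 0 ≤ Λ) (h : ∀ u, quadForm Ω u ≤ Λ * ‖u‖ ^ 2)
    {Ξ : Submodule ℝ (Lp ℝ 2 (volume.restrict Ω))} {n : ℕ} (hΞ : finrank ℝ Ξ = n + 1) :
    sInf {q : ℝ | ∃ u ∈ Ξ, u ≠ 0 ∧ q = quadForm Ω u / ‖u‖ ^ 2} ≤ Λ := by
  have hΞ_ne_bot : Ξ ≠ ⊥ := by
    rintro rfl
    rw [finrank_bot] at hΞ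
    omega
  obtain ⟨v, hv, hv0⟩ := Submodule.exists_mem_ne_zero_of_ne_bot hΞ_ne_bot
  by_cases hbdd : BddBelow {q : ℝ | ∃ u ∈ Ξ, u ≠ 0 ∧ q = quadForm Ω u / ‖u‖ ^ 2}
  · refine (csInf_le hbdd ⟨v, hv, hv0, rfl⟩).trans ?_
    rw [div_le_iff₀ (by positivity)]
    exact h v
  · rw [Real.sInf_of_not_bddBelow hbdd]
    exact hΛ

theorem eigen2_le (hΛ : 0 ≤ Λ) (h : ∀ u, quadForm Ω u ≤ Λ * ‖u‖ ^ 2) (n : ℕ) :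
    eigen2 Ω n ≤ Λ := by
  refine Real.sSup_le ?_ hΛ
  rintro _ ⟨Ξ, hΞ, rfl⟩
  exact sInf_rayleigh_le hΛ h hΞ

theorem rayleigh_le_eigen2_zero (hΛ : 0 ≤ Λ) (h : ∀ u, quadForm Ω u ≤ Λ * ‖u‖ ^ 2)
    {u : Lp ℝ 2 (volume.restrict Ω)} (hu : u ≠ 0) :
    quadForm Ω u / ‖u‖ ^ 2 ≤ eigen2 Ω 0 := by
  refine le_csSup ⟨Λ, ?_⟩ ⟨Submodule.span ℝ {u}, finrank_span_singleton hu, ?_⟩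
  · rintro _ ⟨Ξ, hΞ, rfl⟩
    exact sInf_rayleigh_le hΛ h hΞ
  · rw [setOf_rayleigh_span_singleton hu, csInf_singleton]

end Spectral

section Domain

variable {Ω : Set Pt2}

lemma quadForm_indicatorConstLp {B : Set Pt2} (hB : MeasurableSet B) (hBΩ : B ⊆ Ω)
    (hμB : volume.restrict Ω B ≠ ⊤) :
    quadForm Ω (indicatorConstLp 2 hB hμB (1 : ℝ)) = ∫ x in B, ∫ y in B, logKernel x y := by
  have hcoe := indicatorConstLp_coeFn (p := 2) (hs := hB) (hμs := hμB) (c := (1 : ℝ))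
  have hrestrict : (volume.restrict Ω).restrict B = volume.restrict B := by
    rw [Measure.restrict_restrict hB, inter_eq_left.2 hBΩ]
  have hNOp : ∀ x, NOp Ω (indicatorConstLp 2 hB hμB (1 : ℝ)) x = ∫ y in B, logKernel x y := by
    intro x
    calc _ = ∫ y in Ω, B.indicator (logKernel x) y := by
          refine integral_congr_ae ?_
          filter_upwards [hcoe] with y hy
          by_cases hyB : y ∈ B <;> simp [hy, hyB]
      _ = _ := by rw [integral_indicator hB, hrestrict]
  calc _ = ∫ x in Ω, B.indicator (fun x => ∫ y in B, logKernel x y) x := by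
        refine integral_congr_ae ?_
        filter_upwards [hcoe] with x hx
        by_cases hxB : x ∈ B <;> simp [hNOp, hx, hxB]
    _ = _ := by rw [integral_indicator hB, hrestrict]

theorem eigen2_le_of_subset_ball (hΩ : MeasurableSet Ω) {z : Pt2} {ρ : ℝ} (hρ : 0 < ρ)
    (h2ρ : 2 * ρ ≤ 1) (hsub : Ω ⊆ ball z ρ) (n : ℕ) :
    eigen2 Ω n ≤ 2 * ρ ^ 2 * (1 - log (2 * ρ)) := by
  have hlog : log (2 * ρ) ≤ 0 := log_nonpos (by positivity) h2ρ
  exact eigen2_le (by nlinarith [sq_nonneg ρ])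
    (fun u => (le_abs_self _).trans (abs_quadForm_le_of_subset_ball hΩ hρ h2ρ hsub u)) n

lemma measureReal_ball_fin_two (x : Pt2) {r : ℝ} (hr : 0 ≤ r) :
    volume.real (ball x r) = π * r ^ 2 := by
  simp [measureReal_def, ENNReal.toReal_ofReal hr, pi_pos.le, mul_comm]

lemma le_quadForm_indicatorConstLp_ball {z z' : Pt2} {ρ ρ' : ℝ} (hρ' : 0 < ρ')
    (h2ρ' : 2 * ρ' ≤ 1) (hball : ball z ρ ⊆ Ω) (hsub : Ω ⊆ ball z' ρ')
    (hμB : volume.restrict Ω (ball z ρ) ≠ ⊤) :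
    -(1 / (2 * π)) * log (2 * ρ) * volume.real (ball z ρ) ^ 2 ≤
      quadForm Ω (indicatorConstLp 2 measurableSet_ball hμB (1 : ℝ)) := by
  have hint : IntegrableOn (uncurry logKernel) (ball z ρ ×ˢ ball z ρ) (volume.prod volume) :=
    integrableOn_prod_of_lintegral_enorm_le measurable_logKernel measurableSet_ball
      measure_ball_lt_top.ne ENNReal.ofReal_ne_top fun x hx =>
        lintegral_enorm_logKernel_le_of_subset_ball hρ' h2ρ' (hball.trans hsub) hx
  rw [quadForm_indicatorConstLp _ hball]
  refine le_setIntegral_setIntegral_of_ae_le measurable_logKernel measure_ball_lt_top.ne hint ?_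
  filter_upwards [ae_restrict_mem measurableSet_ball] with x hx
  filter_upwards [ae_restrict_mem measurableSet_ball,
    ae_restrict_of_ae (compl_mem_ae_iff.2 (measure_singleton x))] with y hy hyx
  refine le_logKernel (Ne.symm hyx) ((dist_triangle_right x y z).trans ?_)
  linarith [mem_ball.1 hx, mem_ball.1 hy]

theorem le_eigen2_zero_of_ball_subset (hΩ : MeasurableSet Ω) {z z' : Pt2} {ρ ρ' : ℝ}
    (hρ : 0 < ρ) (hρ' : 0 < ρ') (h2ρ' : 2 * ρ' ≤ 1) (hball : ball z ρ ⊆ Ω)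
    (hsub : Ω ⊆ ball z' ρ') :
    ρ ^ 2 * (-log (2 * ρ)) / 2 ≤ eigen2 Ω 0 := by
  have hlog : log (2 * ρ') ≤ 0 := log_nonpos (by positivity) h2ρ'
  have hμB : volume.restrict Ω (ball z ρ) ≠ ⊤ := by
    rw [Measure.restrict_apply measurableSet_ball, inter_eq_left.2 hball]
    exact measure_ball_lt_top.ne
  set u := indicatorConstLp 2 measurableSet_ball hμB (1 : ℝ)
  have hnorm : ‖u‖ ^ 2 = π * ρ ^ 2 := by
    rw [norm_sq_indicatorConstLp_one, measureReal_restrict_apply measurableSet_ball,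
      inter_eq_left.2 hball, measureReal_ball_fin_two z hρ.le]
  have hu : u ≠ 0 := by
    rintro h
    have hpos : 0 < π * ρ ^ 2 := by positivity
    rw [← hnorm, h, norm_zero] at hpos
    norm_num at hpos
  have hquad := le_quadForm_indicatorConstLp_ball hρ' h2ρ' hball hsub hμB
  rw [measureReal_ball_fin_two z hρ.le] at hquad
  calc ρ ^ 2 * (-log (2 * ρ)) / 2
      = -(1 / (2 * π)) * log (2 * ρ) * (π * ρ ^ 2) ^ 2 / ‖u‖ ^ 2 := by
        rw [hnorm]
        field_simp
    _ ≤ quadForm Ω u / ‖u‖ ^ 2 := by gcongr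
    _ ≤ eigen2 Ω 0 := rayleigh_le_eigen2_zero (by nlinarith [sq_nonneg ρ'])
        (fun v => (le_abs_self _).trans (abs_quadForm_le_of_subset_ball hΩ hρ' h2ρ' hsub v)) hu

end Domain

lemma log_two_mul_le_of_le_mul {a c ρ : ℝ} (ha : 0 < a) (hρ : 0 < ρ) (h : ρ ≤ c * a) :
    log (2 * ρ) ≤ log (2 * c) + log a := by
  have hc : 0 < c := pos_of_mul_pos_left (hρ.trans_le h) ha.le
  rw [← log_mul (by positivity) ha.ne']
  exact log_le_log (by positivity) (by linarith)

lemma le_log_two_mul_of_mul_le {a c ρ : ℝ} (ha : 0 < a) (hc : 0 < c) (h : c * a ≤ ρ) :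
    log (2 * c) + log a ≤ log (2 * ρ) := by
  rw [← log_mul (by positivity) ha.ne']
  exact log_le_log (by positivity) (by linarith)

/-- The largest eigenvalue of the logarithmic potential operator on a domain `Ω`
satisfying the sandwich hypothesis at scale `a` is comparable to `a² |log a|`. -/
theorem eigen2_zero_scaling (c₁ c₂ : ℝ) (hc₁ : 0 < c₁) (hc₁₂ : c₁ ≤ c₂) :
    ∃ (c C a₀ : ℝ), 0 < c ∧ c ≤ C ∧ 0 < a₀ ∧ a₀ < 1 ∧
      ∀ a : ℝ, 0 < a → a < a₀ →
        ∀ Ω : Set Pt2, Bornology.IsBounded Ω → MeasurableSet Ω →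
          Sandwich c₁ c₂ a Ω →
            c * a ^ 2 * |Real.log a| ≤ eigen2 Ω 0 ∧
              eigen2 Ω 0 ≤ C * a ^ 2 * |Real.log a| := by
  set L₀ := max (max (2 * log (2 * c₂)) (1 - log (2 * c₁))) 1
  have hL₀ : 2 * log (2 * c₂) ≤ L₀ ∧ 1 - log (2 * c₁) ≤ L₀ ∧ 1 ≤ L₀ :=
    ⟨(le_max_left _ _).trans (le_max_left _ _), (le_max_right _ _).trans (le_max_left _ _),
      le_max_right _ _⟩
  refine ⟨c₁ ^ 2 / 4, 4 * c₂ ^ 2, exp (-L₀), by positivity, by nlinarith, exp_pos _,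
    exp_lt_one_iff.2 (by linarith), ?_⟩
  rintro a ha ha₀ Ω - hΩ ⟨z₁, z₂, ρ₁, ρ₂, hc₁ρ₁, hρ₁c₂, hc₁ρ₂, hρ₂c₂, hball, hsub⟩
  have hL : L₀ < -log a := by linarith [log_exp (-L₀) ▸ log_lt_log ha ha₀]
  have hρ₁ : 0 < ρ₁ := (mul_pos hc₁ ha).trans_le hc₁ρ₁
  have hρ₂ : 0 < ρ₂ := (mul_pos hc₁ ha).trans_le hc₁ρ₂
  have hlog₁ := log_two_mul_le_of_le_mul ha hρ₁ hρ₁c₂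
  have hlog₂ := le_log_two_mul_of_mul_le ha hc₁ hc₁ρ₂
  have h2ρ₂ : 2 * ρ₂ ≤ 1 :=
    (log_nonpos_iff (by positivity)).1 (by linarith [log_two_mul_le_of_le_mul ha hρ₂ hρ₂c₂])
  rw [abs_of_neg (by linarith)]
  constructor
  · calc c₁ ^ 2 / 4 * a ^ 2 * -log a = (c₁ * a) ^ 2 * (-log a / 2) / 2 := by ring
      _ ≤ ρ₁ ^ 2 * -log (2 * ρ₁) / 2 := by gcongr <;> linarith
      _ ≤ eigen2 Ω 0 := le_eigen2_zero_of_ball_subset hΩ hρ₁ hρ₂ h2ρ₂ hball hsub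
  · calc eigen2 Ω 0 ≤ 2 * ρ₂ ^ 2 * (1 - log (2 * ρ₂)) := eigen2_le_of_subset_ball hΩ hρ₂ h2ρ₂ hsub 0
      _ ≤ 2 * (c₂ * a) ^ 2 * (2 * -log a) := by
        gcongr <;> linarith [log_nonpos (by positivity) h2ρ₂]
      _ = 4 * c₂ ^ 2 * a ^ 2 * -log a := by ring

end
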